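/- Let f : ℝⁿ → ℝⁿ be continuously differentiable with f' Lipschitz with constant L on an open convex set Ω containing x*, x, y with y ≠ x, and set s = y - x and z = f(y) - f(x). Then ‖z - f'(x*) s‖ ≤ (L/2)(‖y - x*‖ + ‖x - x*‖)‖s‖. -/

import Mathlib

/-!
Along the segment `t ↦ x + t • (y - x)` the function `g t = f (x + t • (y - x)) - f x - t • f' xs (y - x)`
vanishes at `0` and has derivative `(f' (x + t • (y - x)) - f' xs) (y - x)`, whose norm is at most
`L ‖y - x‖ (t ‖y - xs‖ + (1 - t) ‖x - xs‖)` by the Lipschitz bound at `xs` and convexity of the norm.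
Comparing `g` with the antiderivative of this bound, which is `L ‖y - x‖ (‖y - xs‖ + ‖x - xs‖) / 2`
at `t = 1`, gives the estimate without integrating `f'`.
-/

open Set

theorem norm_add_smul_sub_sub_le {E : Type*} [NormedAddCommGroup E] [NormedSpace ℝ E]
    (x y z : E) {t : ℝ} (ht : t ∈ Icc (0 : ℝ) 1) :
    ‖x + t • (y - x) - z‖ ≤ t * ‖y - z‖ + (1 - t) * ‖x - z‖ := by
  have hsplit : x + t • (y - x) - z = t • (y - z) + (1 - t) • (x - z) := by module
  calc ‖x + t • (y - x) - z‖ ≤ ‖t • (y - z)‖ + ‖(1 - t) • (x - z)‖ := hsplit ▸ norm_add_le _ _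
    _ = t * ‖y - z‖ + (1 - t) * ‖x - z‖ := by
      rw [norm_smul, norm_smul, Real.norm_of_nonneg ht.1, Real.norm_of_nonneg (sub_nonneg.2 ht.2)]

theorem Convex.norm_image_sub_sub_apply_le_of_lipschitzAt
    {E F : Type*} [NormedAddCommGroup E] [NormedSpace ℝ E] [NormedAddCommGroup F]
    [NormedSpace ℝ F] {s : Set E} (hs : Convex ℝ s) {f : E → F} {f' : E → E →L[ℝ] F}
    (hf : ∀ u ∈ s, HasFDerivAt f (f' u) u) {L : ℝ} (hL : 0 ≤ L) {xs : E}
    (hLip : ∀ u ∈ s, ‖f' u - f' xs‖ ≤ L * ‖u - xs‖) {x y : E} (hx : x ∈ s) (hy : y ∈ s) :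
    ‖f y - f x - f' xs (y - x)‖ ≤ L / 2 * (‖y - xs‖ + ‖x - xs‖) * ‖y - x‖ := by
  set v := y - x
  set a := ‖y - xs‖
  set b := ‖x - xs‖
  set g : ℝ → F := fun t => f (x + t • v) - f x - t • f' xs v
  have hmem : ∀ t ∈ Icc (0 : ℝ) 1, x + t • v ∈ s := fun t ht => hs.add_smul_sub_mem hx hy ht
  have hg : ∀ t ∈ Icc (0 : ℝ) 1, HasDerivAt g (f' (x + t • v) v - f' xs v) t := by
    intro t ht
    have hline : HasDerivAt (fun t : ℝ => x + t • v) v t := by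
      simpa using ((hasDerivAt_id t).smul_const v).const_add x
    exact (((hf _ (hmem t ht)).comp_hasDerivAt t hline).sub_const (f x)).sub
      (by simpa using (hasDerivAt_id t).smul_const (f' xs v))
  have hg'_le : ∀ t ∈ Icc (0 : ℝ) 1,
      ‖f' (x + t • v) v - f' xs v‖ ≤ L * ‖v‖ * (t * a + (1 - t) * b) := by
    intro t ht
    calc ‖f' (x + t • v) v - f' xs v‖ = ‖(f' (x + t • v) - f' xs) v‖ := rfl
      _ ≤ ‖f' (x + t • v) - f' xs‖ * ‖v‖ := ContinuousLinearMap.le_opNorm _ _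
      _ ≤ L * (t * a + (1 - t) * b) * ‖v‖ := by
        gcongr
        exact (hLip _ (hmem t ht)).trans
          (mul_le_mul_of_nonneg_left (norm_add_smul_sub_sub_le x y xs ht) hL)
      _ = L * ‖v‖ * (t * a + (1 - t) * b) := by ring
  have hB : ∀ t : ℝ, HasDerivAt (fun t => L * ‖v‖ * (t ^ 2 / 2 * a + (t - t ^ 2 / 2) * b))
      (L * ‖v‖ * (t * a + (1 - t) * b)) t := by
    intro t
    refine ((((hasDerivAt_pow 2 t).div_const 2).mul_const a).add
      (((hasDerivAt_id t).sub ((hasDerivAt_pow 2 t).div_const 2)).mul_const b)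
      |>.const_mul (L * ‖v‖)).congr_deriv ?_
    ring
  have key := image_norm_le_of_norm_deriv_right_le_deriv_boundary
    (fun t ht => (hg t ht).continuousAt.continuousWithinAt)
    (fun t ht => (hg t (Ico_subset_Icc_self ht)).hasDerivWithinAt)
    (by simp [g]) hB (fun t ht => hg'_le t (Ico_subset_Icc_self ht))
    (right_mem_Icc.2 zero_le_one)
  simp only [g, one_smul, one_pow, v, add_sub_cancel] at key
  exact key.trans_eq (by ring)

theorem stmt_12_general {n : ℕ} (Ω : Set (EuclideanSpace ℝ (Fin n)))
    (hconv : Convex ℝ Ω)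
    (f : EuclideanSpace ℝ (Fin n) → EuclideanSpace ℝ (Fin n))
    (f' : EuclideanSpace ℝ (Fin n) → EuclideanSpace ℝ (Fin n) →L[ℝ] EuclideanSpace ℝ (Fin n))
    (hdiff : ∀ u ∈ Ω, HasFDerivAt f (f' u) u)
    (L : ℝ) (hL : 0 < L)
    (hLip : ∀ u ∈ Ω, ∀ v ∈ Ω, ‖f' u - f' v‖ ≤ L * ‖u - v‖)
    (xs x y : EuclideanSpace ℝ (Fin n)) (hxs : xs ∈ Ω) (hx : x ∈ Ω) (hy : y ∈ Ω)
    (s z : EuclideanSpace ℝ (Fin n))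
    (hsdef : s = y - x) (hzdef : z = f y - f x) :
    ‖z - f' xs s‖ ≤ L / 2 * (‖y - xs‖ + ‖x - xs‖) * ‖s‖ := by
  subst hsdef hzdef
  exact hconv.norm_image_sub_sub_apply_le_of_lipschitzAt hdiff hL.le
    (fun u hu => hLip u hu xs hxs) hx hy

theorem stmt_12 {n : ℕ} (Ω : Set (EuclideanSpace ℝ (Fin n))) (hΩ : IsOpen Ω)
    (hconv : Convex ℝ Ω)
    (f : EuclideanSpace ℝ (Fin n) → EuclideanSpace ℝ (Fin n))
    (f' : EuclideanSpace ℝ (Fin n) → EuclideanSpace ℝ (Fin n) →L[ℝ] EuclideanSpace ℝ (Fin n))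
    (hdiff : ∀ u ∈ Ω, HasFDerivAt f (f' u) u)
    (hcont : ContinuousOn f' Ω)
    (L : ℝ) (hL : 0 < L)
    (hLip : ∀ u ∈ Ω, ∀ v ∈ Ω, ‖f' u - f' v‖ ≤ L * ‖u - v‖)
    (xs x y : EuclideanSpace ℝ (Fin n)) (hxs : xs ∈ Ω) (hx : x ∈ Ω) (hy : y ∈ Ω)
    (hne : y ≠ x) (s z : EuclideanSpace ℝ (Fin n))
    (hsdef : s = y - x) (hzdef : z = f y - f x) :
    ‖z - f' xs s‖ ≤ L / 2 * (‖y - xs‖ + ‖x - xs‖) * ‖s‖ :=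
  stmt_12_general Ω hconv f f' hdiff L hL hLip xs x y hxs hx hy s z hsdef hzdef
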